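/- In the λ-calculus with D-tests, the interpretation is sound with respect to the intersection type system: (a⃗, α) ∈ ⟦M⟧^x⃗ if and only if the judgment x⃗ : a⃗ ⊢ M : α is derivable, and a⃗ ∈ ⟦Q⟧^x⃗ if and only if x⃗ : a⃗ ⊢ Q is derivable, where the type system has rules: axiom (α ∈ a implies x:a ⊢ x:α), weakening, subtyping (Γ ⊢ M:β and α ≤ β implies Γ ⊢ M:α), abstraction (Γ, x:a ⊢ M:α implies Γ ⊢ λx.M : a→α), application (Γ ⊢ M : a→α and Γ ⊢ N:β for all β∈a implies Γ ⊢ M N : α), and corresponding rules for τ̄-sums (some summand's test derivable gives the term its annotation type, up to subtyping), τ (Γ ⊢ M:α implies Γ ⊢ τ_α(M)), sums of tests (some summand derivable), and products of tests (all factors derivable). -/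
import Mathlib


/-- A finite antichain of a poset `D`. -/
def FinAntichain (D : Type*) [PartialOrder D] := {a : Finset D // IsAntichain (· ≤ ·) (a : Set D)}

/-- The order `a ≤ b` iff every element of `a` is below some element of `b`. -/
instance {D : Type*} [PartialOrder D] : Preorder (FinAntichain D) where
  le a b := ∀ α ∈ a.1, ∃ β ∈ b.1, α ≤ β
  le_refl a := fun α h => ⟨α, h, le_refl α⟩
  le_trans a b c hab hbc := fun α hα => by
    obtain ⟨β, hβ, h1⟩ := hab α hα
    obtain ⟨γ, hγ, h2⟩ := hbc β hβ
    exact ⟨γ, hγ, h1.trans h2⟩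

variable {D : Type*} [PartialOrder D]

/-- `a → α := i_D(a, α)` in an extensional K-model `(D, i_D)`. -/
def arrow (i : ((FinAntichain D)ᵒᵈ × D) ≃o D) (a : FinAntichain D) (α : D) : D :=
  i (OrderDual.toDual a, α)

/-- The antecedent antichain `a` of the unfolding `α = a → α'`. -/
def ante (i : ((FinAntichain D)ᵒᵈ × D) ≃o D) (α : D) : FinAntichain D :=
  OrderDual.ofDual (i.symm α).1

/-- The tail `α'` of the unfolding `α = a → α'`. -/
def tail (i : ((FinAntichain D)ᵒᵈ × D) ≃o D) (α : D) : D := (i.symm α).2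

/-- Syntax of the λ-calculus with `D`-tests: terms and tests (de Bruijn indices), with
binary sums (`esum`/`ezero`, considered up to multiset identifications in the rules) and
binary products (`eprod`/`eone`), test operators `τ_α` (`tau`) and `τ̄_α` (`bar`). -/
inductive Expr (D : Type u) : Type u
  | var : ℕ → Expr D
  | lam : Expr D → Expr D
  | app : Expr D → Expr D → Expr D
  | bar : D → Expr D → Expr D
  | tau : D → Expr D → Expr D
  | esum : Expr D → Expr D → Expr D
  | ezero : Expr D
  | eprod : Expr D → Expr D → Expr D
  | eone : Expr D

namespace Expr

/-- Lift (shift by one) the free variables of index `≥ d`. -/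
def lift (d : ℕ) : Expr D → Expr D
  | var n => if n < d then var n else var (n + 1)
  | lam M => lam (lift (d + 1) M)
  | app M N => app (lift d M) (lift d N)
  | bar α Q => bar α (lift d Q)
  | tau α M => tau α (lift d M)
  | esum M N => esum (lift d M) (lift d N)
  | ezero => ezero
  | eprod P Q => eprod (lift d P) (lift d Q)
  | eone => eone

/-- Capture-free substitution of the variable `k` by `N`. -/
def subst : Expr D → ℕ → Expr D → Expr D
  | var n, k, N => if n = k then N else if k < n then var (n - 1) else var n
  | lam M, k, N => lam (subst M (k + 1) (lift 0 N))
  | app M M', k, N => app (subst M k N) (subst M' k N)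
  | bar α Q, k, N => bar α (subst Q k N)
  | tau α M, k, N => tau α (subst M k N)
  | esum M M', k, N => esum (subst M k N) (subst M' k N)
  | ezero, _, _ => ezero
  | eprod P Q, k, N => eprod (subst P k N) (subst Q k N)
  | eone, _, _ => eone

/-- `ε̄_a = Σ_{α ∈ a} τ̄_α(ε)`. -/
noncomputable def epsBar (a : FinAntichain D) : Expr D :=
  a.1.toList.foldr (fun α acc => esum (bar α eone) acc) ezero

/-- `Π_{γ ∈ a} τ_γ(N)`. -/
noncomputable def prodTaus (a : FinAntichain D) (N : Expr D) : Expr D :=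
  a.1.toList.foldr (fun γ acc => eprod (tau γ N) acc) eone

/-- The main and distributive rules of the calculus with `D`-tests (root redexes). -/
inductive Base (i : ((FinAntichain D)ᵒᵈ × D) ≃o D) : Expr D → Expr D → Prop
  | beta (M N : Expr D) : Base i (app (lam M) N) (subst M 0 N)
  | barApp (β : D) (Q N : Expr D) :
      Base i (app (bar β Q) N) (bar (tail i β) (eprod Q (prodTaus (ante i β) N)))
  | sumApp (M M' N : Expr D) : Base i (app (esum M M') N) (esum (app M N) (app M' N))
  | zeroApp (N : Expr D) : Base i (app ezero N) ezero
  | tauLam (β : D) (M : Expr D) :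
      Base i (tau β (lam M)) (tau (tail i β) (subst M 0 (epsBar (ante i β))))
  | tauBarLe {α β : D} (Q : Expr D) : α ≤ β → Base i (tau α (bar β Q)) Q
  | tauBarNle {α β : D} (Q : Expr D) : ¬ α ≤ β → Base i (tau α (bar β Q)) ezero
  | tauSum (α : D) (M M' : Expr D) : Base i (tau α (esum M M')) (esum (tau α M) (tau α M'))
  | tauZero (α : D) : Base i (tau α ezero) ezero
  | barSum (α : D) (Q Q' : Expr D) : Base i (bar α (esum Q Q')) (esum (bar α Q) (bar α Q'))
  | barZero (α : D) : Base i (bar α ezero) ezero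
  | prodSumL (P P' Q : Expr D) : Base i (eprod (esum P P') Q) (esum (eprod P Q) (eprod P' Q))
  | prodSumR (P Q Q' : Expr D) : Base i (eprod P (esum Q Q')) (esum (eprod P Q) (eprod P Q'))
  | prodZeroL (Q : Expr D) : Base i (eprod ezero Q) ezero
  | prodZeroR (Q : Expr D) : Base i (eprod Q ezero) ezero

/-- One-step reduction of the calculus with `D`-tests: closure of the main and distributive
rules under all contexts. -/
inductive Step (i : ((FinAntichain D)ᵒᵈ × D) ≃o D) : Expr D → Expr D → Prop
  | base {M N : Expr D} : Base i M N → Step i M N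
  | lamC {M M' : Expr D} : Step i M M' → Step i (lam M) (lam M')
  | appL {M M' : Expr D} (N : Expr D) : Step i M M' → Step i (app M N) (app M' N)
  | appR (M : Expr D) {N N' : Expr D} : Step i N N' → Step i (app M N) (app M N')
  | barC (α : D) {Q Q' : Expr D} : Step i Q Q' → Step i (bar α Q) (bar α Q')
  | tauC (α : D) {M M' : Expr D} : Step i M M' → Step i (tau α M) (tau α M')
  | sumL {M M' : Expr D} (N : Expr D) : Step i M M' → Step i (esum M N) (esum M' N)
  | sumR (M : Expr D) {N N' : Expr D} : Step i N N' → Step i (esum M N) (esum M N')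
  | prodL {P P' : Expr D} (Q : Expr D) : Step i P P' → Step i (eprod P Q) (eprod P' Q)
  | prodR (P : Expr D) {Q Q' : Expr D} : Step i Q Q' → Step i (eprod P Q) (eprod P Q')

end Expr

namespace Expr

/-- Extension of an environment (de Bruijn): `consE a ρ` assigns `a` to variable `0`. -/
def consE (a : FinAntichain D) (ρ : ℕ → FinAntichain D) : ℕ → FinAntichain D
  | 0 => a
  | n + 1 => ρ n

variable (i : ((FinAntichain D)ᵒᵈ × D) ≃o D)

/-- The direct interpretation in `D`: for each expression, the term-interpretation (a set of
pairs of an environment and a point of `D`) and the test-interpretation (a set of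
environments). -/
def sem : Expr D → ((ℕ → FinAntichain D) → D → Prop) × ((ℕ → FinAntichain D) → Prop)
  | var n => (fun ρ α => ∃ β ∈ (ρ n).1, α ≤ β, fun _ => False)
  | lam M => (fun ρ γ => ∃ (a : FinAntichain D) (β : D),
      γ = arrow i a β ∧ (sem M).1 (consE a ρ) β, fun _ => False)
  | app M N => (fun ρ α => ∃ a : FinAntichain D,
      (sem M).1 ρ (arrow i a α) ∧ ∀ β ∈ a.1, (sem N).1 ρ β, fun _ => False)
  | bar α Q => (fun ρ β => β ≤ α ∧ (sem Q).2 ρ, fun _ => False)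
  | tau α M => (fun _ _ => False, fun ρ => (sem M).1 ρ α)
  | esum M N => (fun ρ α => (sem M).1 ρ α ∨ (sem N).1 ρ α,
      fun ρ => (sem M).2 ρ ∨ (sem N).2 ρ)
  | ezero => (fun _ _ => False, fun _ => False)
  | eprod P Q => (fun _ _ => False, fun ρ => (sem P).2 ρ ∧ (sem Q).2 ρ)
  | eone => (fun _ _ => False, fun _ => True)

mutual
/-- The intersection type system for terms: `TyTm i ρ M α` means `ρ ⊢ M : α`. -/
inductive TyTm : (ℕ → FinAntichain D) → Expr D → D → Prop
  | var {ρ : ℕ → FinAntichain D} {n : ℕ} {α : D} : α ∈ (ρ n).1 → TyTm ρ (var n) α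
  | sub {ρ : ℕ → FinAntichain D} {M : Expr D} {α β : D} :
      TyTm ρ M β → α ≤ β → TyTm ρ M α
  | lam {ρ : ℕ → FinAntichain D} {M : Expr D} {a : FinAntichain D} {α : D} :
      TyTm (consE a ρ) M α → TyTm ρ (Expr.lam M) (arrow i a α)
  | app {ρ : ℕ → FinAntichain D} {M N : Expr D} {a : FinAntichain D} {α : D} :
      TyTm ρ M (arrow i a α) → (∀ β ∈ a.1, TyTm ρ N β) → TyTm ρ (Expr.app M N) α
  | bar {ρ : ℕ → FinAntichain D} {Q : Expr D} (α : D) : TyTs ρ Q → TyTm ρ (Expr.bar α Q) α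
  | sumL {ρ : ℕ → FinAntichain D} {M N : Expr D} {α : D} :
      TyTm ρ M α → TyTm ρ (esum M N) α
  | sumR {ρ : ℕ → FinAntichain D} {M N : Expr D} {α : D} :
      TyTm ρ N α → TyTm ρ (esum M N) α

/-- The intersection type system for tests: `TyTs i ρ Q` means `ρ ⊢ Q`. -/
inductive TyTs : (ℕ → FinAntichain D) → Expr D → Prop
  | tau {ρ : ℕ → FinAntichain D} {M : Expr D} {α : D} : TyTm ρ M α → TyTs ρ (Expr.tau α M)
  | sumL {ρ : ℕ → FinAntichain D} {P Q : Expr D} : TyTs ρ P → TyTs ρ (esum P Q)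
  | sumR {ρ : ℕ → FinAntichain D} {P Q : Expr D} : TyTs ρ Q → TyTs ρ (esum P Q)
  | prod {ρ : ℕ → FinAntichain D} {P Q : Expr D} :
      TyTs ρ P → TyTs ρ Q → TyTs ρ (eprod P Q)
  | one {ρ : ℕ → FinAntichain D} : TyTs ρ eone
end

end Expr

open Expr

section Aux

variable {D : Type*} [PartialOrder D] (i : ((FinAntichain D)ᵒᵈ × D) ≃o D)

lemma arrow_le_arrow_iff (a b : FinAntichain D) (α β : D) :
    arrow i a α ≤ arrow i b β ↔ b ≤ a ∧ α ≤ β := by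
  rw [arrow, arrow, i.le_iff_le, Prod.le_def]
  exact Iff.rfl

lemma arrow_ante_tail (α : D) : arrow i (ante i α) (tail i α) = α := by
  simp [arrow, ante, tail]

lemma le_arrow_decomp {α : D} {a : FinAntichain D} {β : D} (h : α ≤ arrow i a β) :
    a ≤ ante i α ∧ tail i α ≤ β := by
  rw [← arrow_ante_tail i α, arrow_le_arrow_iff] at h
  exact h

lemma sem_mono (M : Expr D) :
    (∀ (ρ ρ' : ℕ → FinAntichain D) (α α' : D), (∀ n, ρ n ≤ ρ' n) → α' ≤ α →
      (sem i M).1 ρ α → (sem i M).1 ρ' α') ∧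
    (∀ (ρ ρ' : ℕ → FinAntichain D), (∀ n, ρ n ≤ ρ' n) →
      (sem i M).2 ρ → (sem i M).2 ρ') := by
  induction M with
  | var n =>
    refine ⟨fun ρ ρ' α α' hρ hα h => ?_, fun _ _ _ h => h.elim⟩
    obtain ⟨β, hβ, hle⟩ := h
    obtain ⟨γ, hγ, hle'⟩ := hρ n β hβ
    exact ⟨γ, hγ, hα.trans (hle.trans hle')⟩
  | lam M ih =>
    refine ⟨fun ρ ρ' α α' hρ hα h => ?_, fun _ _ _ h => h.elim⟩
    obtain ⟨a, β, rfl, hM⟩ := h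
    obtain ⟨ha, hb⟩ := le_arrow_decomp i hα
    refine ⟨ante i α', tail i α', (arrow_ante_tail i α').symm, ?_⟩
    refine ih.1 (consE a ρ) (consE (ante i α') ρ') _ _ (fun n => ?_) hb hM
    cases n with
    | zero => exact ha
    | succ n => exact hρ n
  | app M N ihM ihN =>
    refine ⟨fun ρ ρ' α α' hρ hα h => ?_, fun _ _ _ h => h.elim⟩
    obtain ⟨a, hM, hN⟩ := h
    refine ⟨a, ihM.1 ρ ρ' _ _ hρ ((arrow_le_arrow_iff i a a α' α).2 ⟨le_refl a, hα⟩) hM,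
      fun β hβ => ihN.1 ρ ρ' β β hρ le_rfl (hN β hβ)⟩
  | bar α Q ih =>
    exact ⟨fun ρ ρ' β β' hρ hβ h => ⟨hβ.trans h.1, ih.2 ρ ρ' hρ h.2⟩,
      fun _ _ _ h => h.elim⟩
  | tau α M ih =>
    exact ⟨fun _ _ _ _ _ _ h => h.elim, fun ρ ρ' hρ h => ih.1 ρ ρ' α α hρ le_rfl h⟩
  | esum M N ihM ihN =>
    exact ⟨fun ρ ρ' α α' hρ hα h =>
      h.imp (ihM.1 ρ ρ' α α' hρ hα) (ihN.1 ρ ρ' α α' hρ hα),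
      fun ρ ρ' hρ h => h.imp (ihM.2 ρ ρ' hρ) (ihN.2 ρ ρ' hρ)⟩
  | ezero => exact ⟨fun _ _ _ _ _ _ h => h.elim, fun _ _ _ h => h.elim⟩
  | eprod P Q ihP ihQ =>
    exact ⟨fun _ _ _ _ _ _ h => h.elim,
      fun ρ ρ' hρ h => ⟨ihP.2 ρ ρ' hρ h.1, ihQ.2 ρ ρ' hρ h.2⟩⟩
  | eone => exact ⟨fun _ _ _ _ _ _ h => h.elim, fun _ _ _ _ => trivial⟩

lemma sem_anti {M : Expr D} {ρ : ℕ → FinAntichain D} {α α' : D} (hα : α' ≤ α)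
    (h : (sem i M).1 ρ α) : (sem i M).1 ρ α' :=
  (sem_mono i M).1 ρ ρ α α' (fun _ => le_refl _) hα h

lemma typing_of_sem (M : Expr D) :
    (∀ (ρ : ℕ → FinAntichain D) (α : D), (sem i M).1 ρ α → TyTm i ρ M α) ∧
    (∀ ρ : ℕ → FinAntichain D, (sem i M).2 ρ → TyTs i ρ M) := by
  induction M with
  | var n =>
    exact ⟨fun ρ α ⟨β, hβ, hle⟩ => TyTm.sub (TyTm.var hβ) hle, fun _ h => h.elim⟩
  | lam M ih =>
    refine ⟨fun ρ α h => ?_, fun _ h => h.elim⟩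
    obtain ⟨a, β, rfl, hM⟩ := h
    exact TyTm.lam (ih.1 _ _ hM)
  | app M N ihM ihN =>
    refine ⟨fun ρ α h => ?_, fun _ h => h.elim⟩
    obtain ⟨a, hM, hN⟩ := h
    exact TyTm.app (ihM.1 _ _ hM) (fun β hβ => ihN.1 _ _ (hN β hβ))
  | bar α Q ih =>
    exact ⟨fun ρ β ⟨hle, hQ⟩ => TyTm.sub (TyTm.bar α (ih.2 _ hQ)) hle,
      fun _ h => h.elim⟩
  | tau α M ih =>
    exact ⟨fun _ _ h => h.elim, fun ρ h => TyTs.tau (ih.1 _ _ h)⟩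
  | esum M N ihM ihN =>
    exact ⟨fun ρ α h => h.elim (fun h => TyTm.sumL (ihM.1 _ _ h))
        (fun h => TyTm.sumR (ihN.1 _ _ h)),
      fun ρ h => h.elim (fun h => TyTs.sumL (ihM.2 _ h))
        (fun h => TyTs.sumR (ihN.2 _ h))⟩
  | ezero => exact ⟨fun _ _ h => h.elim, fun _ h => h.elim⟩
  | eprod P Q ihP ihQ =>
    exact ⟨fun _ _ h => h.elim, fun ρ h => TyTs.prod (ihP.2 _ h.1) (ihQ.2 _ h.2)⟩
  | eone => exact ⟨fun _ _ h => h.elim, fun _ _ => TyTs.one⟩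

lemma sem_of_typing :
    (∀ (ρ : ℕ → FinAntichain D) (M : Expr D) (α : D), TyTm i ρ M α → (sem i M).1 ρ α) ∧
    (∀ (ρ : ℕ → FinAntichain D) (Q : Expr D), TyTs i ρ Q → (sem i Q).2 ρ) := by
  have := @TyTm.rec D _ i (fun ρ M α _ => (sem i M).1 ρ α)
    (fun ρ Q _ => (sem i Q).2 ρ)
    (fun {ρ n α} h => ⟨α, h, le_refl α⟩)
    (fun {ρ M α β} _ hle ih => sem_anti i hle ih)
    (fun {ρ M a α} _ ih => ⟨a, α, rfl, ih⟩)
    (fun {ρ M N a α} _ _ ihM ihN => ⟨a, ihM, ihN⟩)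
    (fun {ρ Q} α _ ih => ⟨le_refl α, ih⟩)
    (fun {ρ M N α} _ ih => Or.inl ih)
    (fun {ρ M N α} _ ih => Or.inr ih)
    (fun {ρ M α} _ ih => ih)
    (fun {ρ P Q} _ ih => Or.inl ih)
    (fun {ρ P Q} _ ih => Or.inr ih)
    (fun {ρ P Q} _ _ ihP ihQ => ⟨ihP, ihQ⟩)
    (fun {ρ} => trivial)
  exact ⟨fun ρ M α h => this h, fun ρ Q h => @TyTs.rec D _ i
    (fun ρ M α _ => (sem i M).1 ρ α) (fun ρ Q _ => (sem i Q).2 ρ)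
    (fun {ρ n α} h => ⟨α, h, le_refl α⟩)
    (fun {ρ M α β} _ hle ih => sem_anti i hle ih)
    (fun {ρ M a α} _ ih => ⟨a, α, rfl, ih⟩)
    (fun {ρ M N a α} _ _ ihM ihN => ⟨a, ihM, ihN⟩)
    (fun {ρ Q} α _ ih => ⟨le_refl α, ih⟩)
    (fun {ρ M N α} _ ih => Or.inl ih)
    (fun {ρ M N α} _ ih => Or.inr ih)
    (fun {ρ M α} _ ih => ih)
    (fun {ρ P Q} _ ih => Or.inl ih)
    (fun {ρ P Q} _ ih => Or.inr ih)
    (fun {ρ P Q} _ _ ihP ihQ => ⟨ihP, ihQ⟩)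
    (fun {ρ} => trivial) ρ Q h⟩

end Aux

/-- the interpretation in `D` coincides with derivability in the intersection
type system: `(a⃗, α) ∈ ⟦M⟧^x⃗` iff `x⃗ : a⃗ ⊢ M : α`, and `a⃗ ∈ ⟦Q⟧^x⃗` iff `x⃗ : a⃗ ⊢ Q`. -/
theorem sem_iff_typing {D : Type*} [PartialOrder D]
    (i : ((FinAntichain D)ᵒᵈ × D) ≃o D) (ρ : ℕ → FinAntichain D) :
    (∀ (M : Expr D) (α : D), (sem i M).1 ρ α ↔ TyTm i ρ M α) ∧
    (∀ Q : Expr D, (sem i Q).2 ρ ↔ TyTs i ρ Q) := by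
  exact ⟨fun M α => ⟨fun h => (typing_of_sem i M).1 ρ α h,
      fun h => (sem_of_typing i).1 ρ M α h⟩,
    fun Q => ⟨fun h => (typing_of_sem i Q).2 ρ h,
      fun h => (sem_of_typing i).2 ρ Q h⟩⟩
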